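/- Assume the standing hypotheses (k > 2, σ > 0, P a convex n-gon with monotone error function ψ, φ_k(P) > σ, and φ_k(R) ≤ σ for every proper subpolygon R of P), and suppose in addition that n = k·m + 1 for an integer m > 1, that for every index j the diagonal (v_j, v_{j+m+1}) has a unique witness w_j — i.e. v_j ≺ w_j ≺ v_{j+m+1}, ψ(w_j, v_j, v_{j+m+1}) > σ, and ψ(x, v_j, v_{j+m+1}) ≤ σ for every other vertex x with v_j ≺ x ≺ v_{j+m+1} — and that the map j ↦ w_j is a bijection of the index set. If n > k + 1, then for every index i the following holds: letting j be the unique index with w_j = v_i, at least one of the two witnesses w_{i−m−1} and w_i satisfies v_j ≺ w ≺ v_{j+m+1}. -/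

import Mathlib

/-!
STATEMENT 12: Assume the standing hypotheses (k > 2, σ > 0, P a convex n-gon
with monotone error function ψ, φ_k(P) > σ, and φ_k(R) ≤ σ for every proper
subpolygon R of P), and suppose in addition that n = k·m + 1 for an integer
m > 1, that for every index j the diagonal (v_j, v_{j+m+1}) has a unique witness
w_j — i.e. v_j ≺ w_j ≺ v_{j+m+1}, ψ(w_j, v_j, v_{j+m+1}) > σ, and
ψ(x, v_j, v_{j+m+1}) ≤ σ for every other vertex x with v_j ≺ x ≺ v_{j+m+1} —
and that the map j ↦ w_j is a bijection of the index set.  If n > k + 1, then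
for every index i the following holds: letting j be the unique index with
w_j = v_i, at least one of the two witnesses w_{i−m−1} and w_i satisfies
v_j ≺ w ≺ v_{j+m+1}.
-/

noncomputable section

abbrev Pt := EuclideanSpace ℝ (Fin 2)

/-- `ccw3 a b c` : the triple `(a, b, c)` is positively (counterclockwise) oriented. -/
def ccw3 (a b c : Pt) : Prop :=
  0 < (b 0 - a 0) * (c 1 - a 1) - (b 1 - a 1) * (c 0 - a 0)

/-- `CBtw i j l` : in the counterclockwise cyclic order of `ZMod n`, a traversal
starting at `i` meets `j` strictly after `i` and strictly before `l`. -/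
def CBtw {n : ℕ} (i j l : ZMod n) : Prop :=
  0 < (j - i).val ∧ (j - i).val < (l - i).val

/-- The points `v 0, v 1, …, v (n-1)` are the vertices, in counterclockwise order,
of a convex `n`-gon. -/
def ConvexCCW {n : ℕ} (v : ZMod n → Pt) : Prop :=
  ∀ i j l : ZMod n, CBtw i j l → ccw3 (v i) (v j) (v l)

/-- The approximation error `φ(W, S)` of the subpolygon with vertex index set `W`
by the subpolygon with vertex index set `S ⊆ W`, for the error function `ψ`. -/
def phiSet {n : ℕ} (ψ : ZMod n → ZMod n → ZMod n → ℝ) (W S : Finset (ZMod n)) : ℝ :=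
  sSup {x | ∃ u s t : ZMod n, u ∈ W ∧ u ∉ S ∧ s ∈ S ∧ t ∈ S ∧ CBtw s u t ∧
    (∀ y ∈ S, ¬ CBtw s y t) ∧ x = ψ u s t}

/-- `φ_k` of the subpolygon with vertex index set `W`. -/
def phiK {n : ℕ} (ψ : ZMod n → ZMod n → ZMod n → ℝ) (k : ℕ) (W : Finset (ZMod n)) : ℝ :=
  if W.card ≤ k then 0
  else sInf {x | ∃ S : Finset (ZMod n), S ⊆ W ∧ S.card = k ∧ x = phiSet ψ W S}

/-!
If neither witness lies in the window `(j, j + m + 1)`, delete the `m - 1` vertices of that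
window other than `i = w j`. The remaining proper subpolygon has a `k`-subset `S` of error
at most `σ`, and as `n = k * m + 1` two consecutive vertices `s`, `t` of `S` are more than `m`
apart. Every window lying in the arc `[s, t]` has its witness strictly between `s` and `t`,
where by monotonicity its error against `(s, t)` exceeds `σ`; so that witness was deleted.
For the window starting at `s` this forces `s = i` (then `w i` is in the window of `j`), or
it wraps around past `j`; then `t = i`, and the window ending at `t` has its witness
`w (i - m - 1)` in the window of `j`.
-/

open Finset

section CyclicOrder

variable {n : ℕ} [NeZero n]

lemma ZMod.val_sub_add_val_sub (x y z : ZMod n) :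
    (y - x).val + (z - y).val = (z - x).val ∨ (y - x).val + (z - y).val = (z - x).val + n := by
  have hsplit : z - x = (y - x) + (z - y) := by ring
  rw [hsplit]
  rcases lt_or_ge ((y - x).val + (z - y).val) n with h | h
  · exact .inl (ZMod.val_add_of_lt h).symm
  · exact .inr (by rw [ZMod.val_add_of_le h]; omega)

omit [NeZero n] in
lemma ZMod.val_add_natCast_sub_self (x : ZMod n) {e : ℕ} (he : e < n) :
    (x + e - x).val = e := by
  rw [add_sub_cancel_left, ZMod.val_natCast_of_lt he]

omit [NeZero n] in
lemma ZMod.val_add_add_one_sub_self (x : ZMod n) {m : ℕ} (hm : m + 1 < n) :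
    (x + m + 1 - x).val = m + 1 := by
  rw [add_assoc, ← Nat.cast_add_one, ZMod.val_add_natCast_sub_self x hm]

open scoped Classical in
def openArc (j l : ZMod n) : Finset (ZMod n) := univ.filter fun x => CBtw j x l

@[simp]
lemma mem_openArc {j l x : ZMod n} : x ∈ openArc j l ↔ CBtw j x l := by
  simp [openArc]

lemma card_openArc (j l : ZMod n) : (openArc j l).card = (l - j).val - 1 := by
  have hl : (l - j).val < n := ZMod.val_lt _
  rw [show (l - j).val - 1 = (Ioo 0 (l - j).val).card by simp]
  refine card_nbij' (fun x => (x - j).val) (fun e => j + e) ?_ ?_ ?_ ?_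
  · intro x hx
    simpa [CBtw] using hx
  · intro e he
    simp only [coe_Ioo, Set.mem_Ioo] at he
    rw [mem_coe, mem_openArc, CBtw, ZMod.val_add_natCast_sub_self j (he.2.trans hl)]
    exact he
  · intro x _
    simp
  · intro e he
    simp only [coe_Ioo, Set.mem_Ioo] at he
    exact ZMod.val_add_natCast_sub_self j (he.2.trans hl)

lemma CBtw.of_subarc {s t j c u : ZMod n} (h : CBtw j u c)
    (hsub : (j - s).val + (c - j).val ≤ (t - s).val) :
    (j - s).val < (u - s).val ∧ (u - s).val < (c - s).val ∧ (c - s).val ≤ (t - s).val := by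
  have := ZMod.val_lt (t - s)
  have := ZMod.val_lt (u - s)
  rcases ZMod.val_sub_add_val_sub s j u with hu | hu <;>
  rcases ZMod.val_sub_add_val_sub s j c with hc | hc <;>
  · unfold CBtw at h; omega

lemma exists_long_gap {m : ℕ} (S : Finset (ZMod n)) (hS : 1 < S.card) (hSm : S.card * m < n) :
    ∃ s ∈ S, ∃ t ∈ S, m < (t - s).val ∧ ∀ y ∈ S, ¬ CBtw s y t := by
  by_contra! hshort
  have hsucc : ∀ s ∈ S, ∃ y ∈ S, y ≠ s ∧ (y - s).val ≤ m := by
    intro s hs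
    have hne : (S.erase s).Nonempty := by
      rw [← card_pos, card_erase_of_mem hs]; omega
    obtain ⟨y, hy, hmin⟩ := (S.erase s).exists_min_image (fun y => (y - s).val) hne
    refine ⟨y, mem_of_mem_erase hy, ne_of_mem_erase hy, ?_⟩
    by_contra! hlong
    obtain ⟨z, hz, hzpos, hzlt⟩ := hshort s hs y (mem_of_mem_erase hy) hlong
    have hzs : z ≠ s := by rintro rfl; simp at hzpos
    exact absurd (hmin z (mem_erase.2 ⟨hzs, hz⟩)) (not_le.2 hzlt)
  have hcover : (univ : Finset (ZMod n)) ⊆ (S ×ˢ range m).image fun p => p.1 + p.2 := by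
    intro x _
    obtain ⟨s, hs, hmin⟩ := S.exists_min_image (fun s => (x - s).val) (card_pos.1 (by omega))
    obtain ⟨y, hy, hys, hym⟩ := hsucc s hs
    have hy0 : (y - s).val ≠ 0 := by rwa [Ne, ZMod.val_eq_zero, sub_eq_zero]
    have := hmin y hy
    have := ZMod.val_lt (x - y)
    have hxs : (x - s).val < m := by
      rcases ZMod.val_sub_add_val_sub s y x with h | h <;> omega
    exact mem_image.2 ⟨(s, (x - s).val), mem_product.2 ⟨hs, mem_range.2 hxs⟩, by simp⟩
  have := (card_le_card hcover).trans card_image_le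
  rw [card_univ, ZMod.card, card_product, card_range] at this
  omega

end CyclicOrder

section ErrorBounds

variable {n : ℕ} [NeZero n] (ψ : ZMod n → ZMod n → ZMod n → ℝ)

lemma le_phiSet {W S : Finset (ZMod n)} {u s t : ZMod n} (hu : u ∈ W) (huS : u ∉ S)
    (hs : s ∈ S) (ht : t ∈ S) (hsut : CBtw s u t) (hst : ∀ y ∈ S, ¬ CBtw s y t) :
    ψ u s t ≤ phiSet ψ W S := by
  refine le_csSup ?_ ⟨u, s, t, hu, huS, hs, ht, hsut, hst, rfl⟩
  refine ((Set.finite_range fun p : ZMod n × ZMod n × ZMod n => ψ p.1 p.2.1 p.2.2).subset ?_).bddAbove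
  rintro x ⟨u, s, t, -, -, -, -, -, -, rfl⟩
  exact ⟨(u, s, t), rfl⟩

lemma exists_phiSet_eq_phiK {k : ℕ} {W : Finset (ZMod n)} (hW : k < W.card) :
    ∃ S ⊆ W, S.card = k ∧ phiSet ψ W S = phiK ψ k W := by
  obtain ⟨S₀, hS₀W, hS₀⟩ := exists_subset_card_eq hW.le
  have hne : {x | ∃ S : Finset (ZMod n), S ⊆ W ∧ S.card = k ∧ x = phiSet ψ W S}.Nonempty :=
    ⟨_, S₀, hS₀W, hS₀, rfl⟩
  have hfin : {x | ∃ S : Finset (ZMod n), S ⊆ W ∧ S.card = k ∧ x = phiSet ψ W S}.Finite := by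
    refine (Set.finite_range fun S : Finset (ZMod n) => phiSet ψ W S).subset ?_
    rintro x ⟨S, -, -, rfl⟩
    exact ⟨S, rfl⟩
  obtain ⟨S, hSW, hS, hSφ⟩ := hne.csInf_mem hfin
  exact ⟨S, hSW, hS, by rw [phiK, if_neg hW.not_ge, hSφ]⟩

end ErrorBounds

section Windows

variable {n : ℕ} [NeZero n]

lemma notMem_of_window_in_gap (ψ : ZMod n → ZMod n → ZMod n → ℝ)
    (hψ : ∀ u s t s' t' : ZMod n, CBtw s u t →
      (s' - s).val < (u - s).val → (u - s).val < (t' - s).val →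
      (t' - s).val ≤ (t - s).val → ψ u s' t' ≤ ψ u s t)
    {W S : Finset (ZMod n)} {σ : ℝ} (hφ : phiSet ψ W S ≤ σ)
    {s t : ZMod n} (hs : s ∈ S) (ht : t ∈ S) (hst : ∀ y ∈ S, ¬ CBtw s y t)
    {j c u : ZMod n} (hu : CBtw j u c) (hσu : σ < ψ u j c)
    (hsub : (j - s).val + (c - j).val ≤ (t - s).val) : u ∉ W := by
  intro huW
  obtain ⟨hju, huc, hct⟩ := hu.of_subarc hsub
  have hsut : CBtw s u t := ⟨by omega, by omega⟩
  have huS : u ∉ S := fun huS => hst u huS hsut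
  have := hψ u s t j c hsut hju huc hct
  have := le_phiSet ψ huW huS hs ht hsut hst
  linarith

lemma near_witness_of_long_gap {m : ℕ} (hmn : m + 1 < n) {w : ZMod n → ZMod n}
    (hw : ∀ j, CBtw j (w j) (j + m + 1)) {i j s t : ZMod n} (hji : w j = i)
    (hs : s ∉ (openArc j (j + m + 1)).erase i) (ht : t ∉ (openArc j (j + m + 1)).erase i)
    (hgap : m < (t - s).val)
    (hwin : ∀ j', (j' - s).val + (m + 1) ≤ (t - s).val →
      w j' ∈ (openArc j (j + m + 1)).erase i) :
    CBtw j (w (i - (m + 1))) (j + m + 1) ∨ CBtw j (w i) (j + m + 1) := by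
  have hM : (j + m + 1 - j).val = m + 1 := ZMod.val_add_add_one_sub_self j hmn
  obtain ⟨hws_ne, hws⟩ := mem_erase.1 (hwin s (by rw [sub_self, ZMod.val_zero]; omega))
  have hws_s := hw s
  rw [mem_openArc, CBtw, hM] at hws
  rw [CBtw, ZMod.val_add_add_one_sub_self s hmn] at hws_s
  have := ZMod.val_lt (s - j)
  rcases ZMod.val_sub_add_val_sub j s (w s) with hnowrap | hwrap
  · by_cases hsj : s = j
    · exact absurd (hsj ▸ hji) hws_ne
    · have hsj' : (s - j).val ≠ 0 := by rwa [Ne, ZMod.val_eq_zero, sub_eq_zero]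
      have hsi : s = i := by
        by_contra hsi
        exact hs (mem_erase.2 ⟨hsi, mem_openArc.2 ⟨by omega, by omega⟩⟩)
      exact .inr (hsi ▸ ⟨by omega, by omega⟩)
  · -- `j` lies in the gap, and its window is not contained in it since `w j = i`
    left
    set j₀ : ZMod n := i - (m + 1)
    have := ZMod.val_lt (j - s)
    have := ZMod.val_lt (t - s)
    have := ZMod.val_lt (t - j)
    have := ZMod.val_lt (j₀ - s)
    have hjs := ZMod.val_sub_add_val_sub s j s
    rw [sub_self, ZMod.val_zero] at hjs
    have hj_late : ¬ (j - s).val + (m + 1) ≤ (t - s).val :=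
      fun h => (mem_erase.1 (hwin j h)).1 hji
    have hjst := ZMod.val_sub_add_val_sub j s t
    have hti : t = i := by
      by_contra hti
      exact ht (mem_erase.2 ⟨hti, mem_openArc.2 ⟨by omega, by omega⟩⟩)
    have hlast : (t - j₀).val = m + 1 := by
      rw [hti, sub_sub_cancel, ← Nat.cast_add_one, ZMod.val_natCast_of_lt hmn]
    have hsit := ZMod.val_sub_add_val_sub s j₀ t
    exact mem_openArc.1 (mem_erase.1 (hwin _ (by omega))).2

end Windows

theorem near_witness_general (k n m : ℕ) [NeZero n] (hk : 2 < k) (hm : 1 < m)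
    (hnm : n = k * m + 1)
    (ψ : ZMod n → ZMod n → ZMod n → ℝ)
    (hψmono : ∀ u s t s' t' : ZMod n, CBtw s u t →
      (s' - s).val < (u - s).val → (u - s).val < (t' - s).val →
      (t' - s).val ≤ (t - s).val → ψ u s' t' ≤ ψ u s t)
    (σ : ℝ)
    (hsub : ∀ W : Finset (ZMod n), W ⊂ Finset.univ → phiK ψ k W ≤ σ)
    (w : ZMod n → ZMod n)
    (hwit : ∀ j : ZMod n, CBtw j (w j) (j + (m : ZMod n) + 1) ∧
      σ < ψ (w j) j (j + (m : ZMod n) + 1) ∧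
      ∀ x : ZMod n, CBtw j x (j + (m : ZMod n) + 1) → x ≠ w j →
        ψ x j (j + (m : ZMod n) + 1) ≤ σ) :
    ∀ i j : ZMod n, w j = i →
      CBtw j (w (i - ((m : ZMod n) + 1))) (j + (m : ZMod n) + 1) ∨
      CBtw j (w i) (j + (m : ZMod n) + 1) := by
  intro i j hji
  have hmn : m + 1 < n := by nlinarith
  set X := (openArc j (j + m + 1)).erase i
  have hX : X.card = m - 1 := by
    rw [card_erase_of_mem (mem_openArc.2 (hji ▸ (hwit j).1)), card_openArc,
      ZMod.val_add_add_one_sub_self j hmn]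
    omega
  have hW : Xᶜ ⊂ univ := by
    rw [ssubset_univ_iff, Ne, compl_eq_univ_iff, ← card_eq_zero, hX]
    omega
  have hWk : k < Xᶜ.card := by
    rw [card_compl, ZMod.card, hX]
    have : k + m ≤ k * m + 1 := by nlinarith
    omega
  obtain ⟨S, hSW, hSk, hSφ⟩ := exists_phiSet_eq_phiK ψ hWk
  obtain ⟨s, hs, t, ht, hgap, hst⟩ :=
    exists_long_gap (m := m) S (by omega) (by rw [hSk, hnm]; omega)
  refine near_witness_of_long_gap hmn (fun j => (hwit j).1) hji
    (mem_compl.1 (hSW hs)) (mem_compl.1 (hSW ht)) hgap fun j' hj' => ?_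
  by_contra hj'X
  refine notMem_of_window_in_gap ψ hψmono (hSφ ▸ hsub _ hW) hs ht hst (hwit j').1 (hwit j').2.1
    (by rwa [ZMod.val_add_add_one_sub_self j' hmn]) (mem_compl.2 hj'X)

theorem near_witness (k n m : ℕ) [NeZero n] (hk : 2 < k) (hm : 1 < m)
    (hnm : n = k * m + 1)
    (v : ZMod n → Pt) (hconv : ConvexCCW v)
    (ψ : ZMod n → ZMod n → ZMod n → ℝ)
    (hψ0 : ∀ u s t : ZMod n, CBtw s u t → 0 ≤ ψ u s t)
    (hψmono : ∀ u s t s' t' : ZMod n, CBtw s u t →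
      (s' - s).val < (u - s).val → (u - s).val < (t' - s).val →
      (t' - s).val ≤ (t - s).val → ψ u s' t' ≤ ψ u s t)
    (σ : ℝ) (hσ : 0 < σ)
    (hP : σ < phiK ψ k Finset.univ)
    (hsub : ∀ W : Finset (ZMod n), W ⊂ Finset.univ → phiK ψ k W ≤ σ)
    (w : ZMod n → ZMod n) (hbij : Function.Bijective w)
    (hwit : ∀ j : ZMod n, CBtw j (w j) (j + (m : ZMod n) + 1) ∧
      σ < ψ (w j) j (j + (m : ZMod n) + 1) ∧
      ∀ x : ZMod n, CBtw j x (j + (m : ZMod n) + 1) → x ≠ w j →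
        ψ x j (j + (m : ZMod n) + 1) ≤ σ)
    (hbig : k + 1 < n) :
    ∀ i j : ZMod n, w j = i →
      CBtw j (w (i - ((m : ZMod n) + 1))) (j + (m : ZMod n) + 1) ∨
      CBtw j (w i) (j + (m : ZMod n) + 1) :=
  near_witness_general k n m hk hm hnm ψ hψmono σ hsub w hwit
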